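/- (Example 8.4, unprovability part) The formula ⊔y⊓x(p(x) → p(y)) is not provable in CL12, where p is a unary nonlogical predicate letter, even though its classical counterpart ∃y∀x(p(x) → p(y)) is a classically valid elementary formula and hence is provable in CL12. -/

import Mathlib

namespace CL12

/-- Terms: variables, constants (named by natural numbers), and applications
of function letters (a function letter is a pair of a name and an arity). -/
inductive Term : Type
  | var : ℕ → Term
  | const : ℕ → Term
  | func : (f : ℕ) → (n : ℕ) → (Fin n → Term) → Term

/-- Replace every occurrence of the variable `x` by the term `t`. -/
def Term.subst (x : ℕ) (t : Term) : Term → Term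
  | .var y => if y = x then t else .var y
  | .const c => .const c
  | .func f n g => .func f n fun i => Term.subst x t (g i)

/-- The set of variables occurring in a term. -/
def Term.vars : Term → Finset ℕ
  | .var y => {y}
  | .const _ => ∅
  | .func _ n g => Finset.univ.biUnion fun i : Fin n => (g i).vars

/-- A classical first-order structure interpreting constants, function letters
and nonlogical predicate letters (identity is interpreted as actual identity). -/
structure Interp where
  U : Type
  hU : Nonempty U
  constI : ℕ → U
  funcI : (f n : ℕ) → (Fin n → U) → U
  predI : (p n : ℕ) → (Fin n → U) → Prop

/-- Evaluation of terms under an interpretation and a valuation. -/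
def Term.eval (I : Interp) (e : ℕ → I.U) : Term → I.U
  | .var y => e y
  | .const c => I.constI c
  | .func f n g => I.funcI f n fun i => (g i).eval I e

/-- Formulas of the language of CL12.  Negation is officially applied to atoms
only, so atoms come in a positive (`pos`, `eq`) and a negative (`neg`, `neq`)
form.  `and`/`or` are the parallel connectives ∧/∨, `cand`/`cor` the choice
connectives ⊓/⊔, `all`/`ex` the blind quantifiers ∀/∃ and `call`/`cex` the
choice quantifiers ⊓x/⊔x. -/
inductive Formula : Type
  | top : Formula
  | bot : Formula
  | pos (p n : ℕ) (args : Fin n → Term) : Formula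
  | neg (p n : ℕ) (args : Fin n → Term) : Formula
  | eq (t₁ t₂ : Term) : Formula
  | neq (t₁ t₂ : Term) : Formula
  | and (A B : Formula) : Formula
  | or (A B : Formula) : Formula
  | cand (A B : Formula) : Formula
  | cor (A B : Formula) : Formula
  | all (x : ℕ) (A : Formula) : Formula
  | ex (x : ℕ) (A : Formula) : Formula
  | call (x : ℕ) (A : Formula) : Formula
  | cex (x : ℕ) (A : Formula) : Formula

/-- Negation of an arbitrary formula, as an abbreviation via the De Morgan
dualities. -/
def Formula.negation : Formula → Formula
  | .top => .bot
  | .bot => .top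
  | .pos p n args => .neg p n args
  | .neg p n args => .pos p n args
  | .eq a b => .neq a b
  | .neq a b => .eq a b
  | .and A B => .or A.negation B.negation
  | .or A B => .and A.negation B.negation
  | .cand A B => .cor A.negation B.negation
  | .cor A B => .cand A.negation B.negation
  | .all x A => .ex x A.negation
  | .ex x A => .all x A.negation
  | .call x A => .cex x A.negation
  | .cex x A => .call x A.negation

/-- `E → F` abbreviates `¬E ∨ F`. -/
def Formula.impl (A B : Formula) : Formula := .or A.negation B

/-- Substitution of the term `t` for all free occurrences of the variable `x`. -/
def Formula.subst (x : ℕ) (t : Term) : Formula → Formula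
  | .top => .top
  | .bot => .bot
  | .pos p n args => .pos p n fun i => Term.subst x t (args i)
  | .neg p n args => .neg p n fun i => Term.subst x t (args i)
  | .eq a b => .eq (Term.subst x t a) (Term.subst x t b)
  | .neq a b => .neq (Term.subst x t a) (Term.subst x t b)
  | .and A B => .and (A.subst x t) (B.subst x t)
  | .or A B => .or (A.subst x t) (B.subst x t)
  | .cand A B => .cand (A.subst x t) (B.subst x t)
  | .cor A B => .cor (A.subst x t) (B.subst x t)
  | .all y A => if y = x then .all y A else .all y (A.subst x t)
  | .ex y A => if y = x then .ex y A else .ex y (A.subst x t)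
  | .call y A => if y = x then .call y A else .call y (A.subst x t)
  | .cex y A => if y = x then .cex y A else .cex y (A.subst x t)

/-- All variables occurring (free or bound) in a formula. -/
def Formula.vars : Formula → Finset ℕ
  | .top => ∅
  | .bot => ∅
  | .pos _ n args => Finset.univ.biUnion fun i : Fin n => (args i).vars
  | .neg _ n args => Finset.univ.biUnion fun i : Fin n => (args i).vars
  | .eq a b => a.vars ∪ b.vars
  | .neq a b => a.vars ∪ b.vars
  | .and A B => A.vars ∪ B.vars
  | .or A B => A.vars ∪ B.vars
  | .cand A B => A.vars ∪ B.vars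
  | .cor A B => A.vars ∪ B.vars
  | .all x A => insert x A.vars
  | .ex x A => insert x A.vars
  | .call x A => insert x A.vars
  | .cex x A => insert x A.vars

/-- Variables having a bound occurrence in a formula. -/
def Formula.boundVars : Formula → Finset ℕ
  | .top => ∅
  | .bot => ∅
  | .pos _ _ _ => ∅
  | .neg _ _ _ => ∅
  | .eq _ _ => ∅
  | .neq _ _ => ∅
  | .and A B => A.boundVars ∪ B.boundVars
  | .or A B => A.boundVars ∪ B.boundVars
  | .cand A B => A.boundVars ∪ B.boundVars
  | .cor A B => A.boundVars ∪ B.boundVars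
  | .all x A => insert x A.boundVars
  | .ex x A => insert x A.boundVars
  | .call x A => insert x A.boundVars
  | .cex x A => insert x A.boundVars

/-- A formula is elementary iff it contains no choice operators. -/
def Formula.IsElementary : Formula → Prop
  | .top => True
  | .bot => True
  | .pos _ _ _ => True
  | .neg _ _ _ => True
  | .eq _ _ => True
  | .neq _ _ => True
  | .and A B => A.IsElementary ∧ B.IsElementary
  | .or A B => A.IsElementary ∧ B.IsElementary
  | .cand _ _ => False
  | .cor _ _ => False
  | .all _ A => A.IsElementary
  | .ex _ A => A.IsElementary
  | .call _ _ => False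
  | .cex _ _ => False

/-- The elementarization ‖F‖ of a formula: all ⊔- and ⊔x-subformulas are
replaced by ⊥, and all ⊓- and ⊓x-subformulas by ⊤. -/
def Formula.elz : Formula → Formula
  | .top => .top
  | .bot => .bot
  | .pos p n args => .pos p n args
  | .neg p n args => .neg p n args
  | .eq a b => .eq a b
  | .neq a b => .neq a b
  | .and A B => .and A.elz B.elz
  | .or A B => .or A.elz B.elz
  | .cand _ _ => .top
  | .cor _ _ => .bot
  | .all x A => .all x A.elz
  | .ex x A => .ex x A.elz
  | .call _ _ => .top
  | .cex _ _ => .bot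

/-- Classical truth of a formula under an interpretation and a valuation
(identity is interpreted as actual identity; the choice operators, which never
occur in the elementary formulas this notion is applied to, are read as their
parallel/blind counterparts). -/
def Formula.truth (I : Interp) : (ℕ → I.U) → Formula → Prop
  | _, .top => True
  | _, .bot => False
  | e, .pos p n args => I.predI p n fun i => (args i).eval I e
  | e, .neg p n args => ¬ I.predI p n fun i => (args i).eval I e
  | e, .eq a b => a.eval I e = b.eval I e
  | e, .neq a b => a.eval I e ≠ b.eval I e
  | e, .and A B => A.truth I e ∧ B.truth I e
  | e, .or A B => A.truth I e ∨ B.truth I e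
  | e, .cand A B => A.truth I e ∧ B.truth I e
  | e, .cor A B => A.truth I e ∨ B.truth I e
  | e, .all x A => ∀ u : I.U, A.truth I (Function.update e x u)
  | e, .ex x A => ∃ u : I.U, A.truth I (Function.update e x u)
  | e, .call x A => ∀ u : I.U, A.truth I (Function.update e x u)
  | e, .cex x A => ∃ u : I.U, A.truth I (Function.update e x u)

/-- Classical validity; by Gödel's completeness theorem this is the same as
provability in classical first-order calculus with constants, function letters
and =, where = is the logical identity predicate. -/
def Valid (F : Formula) : Prop := ∀ (I : Interp) (e : ℕ → I.U), F.truth I e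

/-- The winner of the empty run of the game `F*` on valuation `e`: the
proposition that the empty run is ⊤-won.  Atoms are resolved by truth, the
empty run of `A ⊓ B` and `⊓x A` is ⊤-won, the empty run of `A ⊔ B` and `⊔x A`
is ⊥-won. -/
def Formula.wn0 (I : Interp) : (ℕ → I.U) → Formula → Prop
  | _, .top => True
  | _, .bot => False
  | e, .pos p n args => I.predI p n fun i => (args i).eval I e
  | e, .neg p n args => ¬ I.predI p n fun i => (args i).eval I e
  | e, .eq a b => a.eval I e = b.eval I e
  | e, .neq a b => a.eval I e ≠ b.eval I e
  | e, .and A B => A.wn0 I e ∧ B.wn0 I e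
  | e, .or A B => A.wn0 I e ∨ B.wn0 I e
  | _, .cand _ _ => True
  | _, .cor _ _ => False
  | e, .all x A => ∀ u : I.U, A.wn0 I (Function.update e x u)
  | e, .ex x A => ∃ u : I.U, A.wn0 I (Function.update e x u)
  | _, .call _ _ => True
  | _, .cex _ _ => False

/-- A sequent E₁,…,Eₙ ⊸ F. -/
structure Sequent where
  ant : List Formula
  suc : Formula

/-- The conjunction E₁ ∧ … ∧ Eₙ of a list of formulas (⊤ when the list is empty). -/
def listAnd : List Formula → Formula
  | [] => .top
  | [A] => A
  | A :: l => .and A (listAnd l)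

/-- The elementarization ‖E₁‖∧…∧‖Eₙ‖ → ‖F‖ of a sequent. -/
def Sequent.elz (S : Sequent) : Formula :=
  (listAnd (S.ant.map Formula.elz)).impl S.suc.elz

/-- A sequent is stable iff its elementarization is classically valid
(equivalently, provable in classical first-order calculus with constants,
function letters and =). -/
def Stable (S : Sequent) : Prop := Valid S.elz

/-- All variables occurring in a sequent. -/
def Sequent.vars (S : Sequent) : Finset ℕ :=
  S.ant.foldr (fun A acc => A.vars ∪ acc) S.suc.vars

/-- Variables having a bound occurrence in a sequent. -/
def Sequent.boundVars (S : Sequent) : Finset ℕ :=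
  S.ant.foldr (fun A acc => A.boundVars ∪ acc) S.suc.boundVars

/-- The winner of the empty run of a sequent E₁,…,Eₙ ⊸ F: it is ⊤-won iff the
empty run of some Eᵢ is ⊥-won or the empty run of F is ⊤-won. -/
def Sequent.wn0 (S : Sequent) (I : Interp) (e : ℕ → I.U) : Prop :=
  (∃ E ∈ S.ant, ¬ E.wn0 I e) ∨ S.suc.wn0 I e

/-- A context: a formula with a single hole which is a surface position, i.e.,
not in the scope of any choice operator.  `C.fill H` is the formula `F[H]`
having the indicated surface occurrence of `H`. -/
inductive Ctx : Type
  | hole : Ctx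
  | andL (C : Ctx) (B : Formula) : Ctx
  | andR (A : Formula) (C : Ctx) : Ctx
  | orL (C : Ctx) (B : Formula) : Ctx
  | orR (A : Formula) (C : Ctx) : Ctx
  | all (x : ℕ) (C : Ctx) : Ctx
  | ex (x : ℕ) (C : Ctx) : Ctx

/-- Filling the hole of a context with a formula. -/
def Ctx.fill : Ctx → Formula → Formula
  | .hole, H => H
  | .andL C B, H => .and (C.fill H) B
  | .andR A C, H => .and A (C.fill H)
  | .orL C B, H => .or (C.fill H) B
  | .orR A C, H => .or A (C.fill H)
  | .all x C, H => .all x (C.fill H)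
  | .ex x C, H => .ex x (C.fill H)

/-- The hole of the context is not in the scope of ∧. -/
def Ctx.noAnd : Ctx → Prop
  | .hole => True
  | .andL _ _ => False
  | .andR _ _ => False
  | .orL C _ => C.noAnd
  | .orR _ C => C.noAnd
  | .all _ C => C.noAnd
  | .ex _ C => C.noAnd

/-- The hole of the context is not in the scope of ∨. -/
def Ctx.noOr : Ctx → Prop
  | .hole => True
  | .andL C _ => C.noOr
  | .andR _ C => C.noOr
  | .orL _ _ => False
  | .orR _ _ => False
  | .all _ C => C.noOr
  | .ex _ C => C.noOr

/-- In the ⊔x-Choose and ⊓x-Choose rules, the term chosen for `x` must be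
either a constant, or a variable with no bound occurrences in the premise. -/
def GoodTerm (t : Term) (premise : Sequent) : Prop :=
  (∃ c, t = Term.const c) ∨ (∃ y, t = Term.var y ∧ y ∉ premise.boundVars)

/-- CL12-provability, defined by the six rules ⊔-Choose, ⊓-Choose, ⊔x-Choose,
⊓x-Choose, Replicate and Wait.  In the Wait rule, the predicate `P` carves out
the set of premises Y₁,…,Yₙ of the rule, all of which are required to be
provable. -/
inductive Provable : Sequent → Prop
  | corChoose (Γ : List Formula) (C : Ctx) (H0 H1 : Formula) (i : Bool) :
      Provable ⟨Γ, C.fill (bif i then H1 else H0)⟩ →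
      Provable ⟨Γ, C.fill (.cor H0 H1)⟩
  | candChoose (Γ Δ : List Formula) (C : Ctx) (H0 H1 F : Formula) (i : Bool) :
      Provable ⟨Γ ++ C.fill (bif i then H1 else H0) :: Δ, F⟩ →
      Provable ⟨Γ ++ C.fill (.cand H0 H1) :: Δ, F⟩
  | cexChoose (Γ : List Formula) (C : Ctx) (x : ℕ) (H : Formula) (t : Term) :
      GoodTerm t ⟨Γ, C.fill (H.subst x t)⟩ →
      Provable ⟨Γ, C.fill (H.subst x t)⟩ →
      Provable ⟨Γ, C.fill (.cex x H)⟩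
  | callChoose (Γ Δ : List Formula) (C : Ctx) (x : ℕ) (H F : Formula) (t : Term) :
      GoodTerm t ⟨Γ ++ C.fill (H.subst x t) :: Δ, F⟩ →
      Provable ⟨Γ ++ C.fill (H.subst x t) :: Δ, F⟩ →
      Provable ⟨Γ ++ C.fill (.call x H) :: Δ, F⟩
  | replicate (Γ Δ : List Formula) (E F : Formula) :
      Provable ⟨Γ ++ E :: Δ ++ [E], F⟩ →
      Provable ⟨Γ ++ E :: Δ, F⟩
  | wait (X : Sequent) (P : Sequent → Prop)
      (hstable : Stable X)
      (hcand : ∀ (C : Ctx) (H0 H1 : Formula), X.suc = C.fill (.cand H0 H1) →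
          P ⟨X.ant, C.fill H0⟩ ∧ P ⟨X.ant, C.fill H1⟩)
      (hcor : ∀ (Γ Δ : List Formula) (C : Ctx) (H0 H1 : Formula),
          X.ant = Γ ++ C.fill (.cor H0 H1) :: Δ →
          P ⟨Γ ++ C.fill H0 :: Δ, X.suc⟩ ∧ P ⟨Γ ++ C.fill H1 :: Δ, X.suc⟩)
      (hcall : ∀ (C : Ctx) (x : ℕ) (H : Formula), X.suc = C.fill (.call x H) →
          ∃ y, y ∉ X.vars ∧ P ⟨X.ant, C.fill (H.subst x (.var y))⟩)
      (hcex : ∀ (Γ Δ : List Formula) (C : Ctx) (x : ℕ) (H : Formula),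
          X.ant = Γ ++ C.fill (.cex x H) :: Δ →
          ∃ y, y ∉ X.vars ∧ P ⟨Γ ++ C.fill (H.subst x (.var y)) :: Δ, X.suc⟩)
      (hprov : ∀ Y, P Y → Provable Y) :
      Provable X


/-!
A CL12-proof of `⊸ F` with empty antecedent must end in ⊔-Choose or ⊔x-Choose on a surface
choice of `F`, or in Wait, which needs `‖F‖` valid and, for a surface `⊓x`, a premise with a
fresh variable. For `⊔y⊓x(p(x) → p(y))` Wait is impossible (`‖F‖ = ⊥`), so the proof ends by
choosing a term `t`, which the side condition keeps free of `x`. The premise `⊸ ⊓x(p(x) → p(t))`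
can then only come from Wait, whose premise `⊸ p(z) → p(t)` with `z` fresh is elementary and
would have to be valid; but it fails in the two-element model where `p` holds of `z` only.
Classically, by contrast, `∃y∀x(p(x) → p(y))` holds: take for `y` a witness of `p` if there is one.
-/

lemma Term.subst_eq_self {x : ℕ} {s : Term} : ∀ t : Term, x ∉ t.vars → Term.subst x s t = t
  | .var y, h => by
    simp only [Term.vars, Finset.mem_singleton] at h
    simp [Term.subst, Ne.symm h]
  | .const _, _ => rfl
  | .func f n g, h => by
    simp only [Term.vars, Finset.mem_biUnion, Finset.mem_univ, true_and, not_exists] at h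
    simp only [Term.subst, Term.subst_eq_self _ (h _)]

lemma Formula.elz_eq_self : ∀ {F : Formula}, F.IsElementary → F.elz = F
  | .top, _ | .bot, _ | .pos .., _ | .neg .., _ | .eq .., _ | .neq .., _ => rfl
  | .and A B, h | .or A B, h => by
    simp only [Formula.elz, elz_eq_self (F := A) h.1, elz_eq_self (F := B) h.2]
  | .all _ A, h | .ex _ A, h => by simp only [Formula.elz, elz_eq_self (F := A) h]

lemma Ctx.isElementary_of_fill : ∀ (C : Ctx) {G : Formula}, (C.fill G).IsElementary →
    G.IsElementary
  | .hole, _, h => h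
  | .andL C _, _, h | .orL C _, _, h => C.isElementary_of_fill h.1
  | .andR _ C, _, h | .orR _ C, _, h => C.isElementary_of_fill h.2
  | .all _ C, _, h | .ex _ C, _, h => C.isElementary_of_fill h

lemma Ctx.eq_hole_of_fill_eq_call {C : Ctx} {G H : Formula} {x : ℕ}
    (h : C.fill G = .call x H) : C = .hole := by
  cases C <;> simp_all [Ctx.fill]

lemma Ctx.eq_hole_of_fill_eq_cex {C : Ctx} {G H : Formula} {x : ℕ}
    (h : C.fill G = .cex x H) : C = .hole := by
  cases C <;> simp_all [Ctx.fill]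

lemma stable_nil_iff {F : Formula} : Stable ⟨[], F⟩ ↔ Valid F.elz := by
  simp [Stable, Valid, Sequent.elz, listAnd, Formula.impl, Formula.negation, Formula.truth]

lemma not_valid_bot : ¬ Valid .bot :=
  fun h => h ⟨PUnit, ⟨⟨⟩⟩, fun _ => ⟨⟩, fun _ _ _ => ⟨⟩, fun _ _ _ => True⟩ fun _ => ⟨⟩

lemma Provable.nil_cases {F : Formula} (h : Provable ⟨[], F⟩) :
    (∃ (C : Ctx) (H0 H1 : Formula) (i : Bool),
      F = C.fill (.cor H0 H1) ∧ Provable ⟨[], C.fill (bif i then H1 else H0)⟩) ∨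
    (∃ (C : Ctx) (x : ℕ) (H : Formula) (t : Term), F = C.fill (.cex x H) ∧
      GoodTerm t ⟨[], C.fill (H.subst x t)⟩ ∧ Provable ⟨[], C.fill (H.subst x t)⟩) ∨
    (Valid F.elz ∧ ∀ (C : Ctx) (x : ℕ) (H : Formula), F = C.fill (.call x H) →
      ∃ y, y ∉ F.vars ∧ Provable ⟨[], C.fill (H.subst x (.var y))⟩) := by
  generalize hS : (⟨[], F⟩ : Sequent) = S at h
  cases h with
  | corChoose Γ C H0 H1 i hp =>
    obtain ⟨rfl, rfl⟩ := Sequent.mk.inj hS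
    exact .inl ⟨C, H0, H1, i, rfl, hp⟩
  | cexChoose Γ C x H t hgood hp =>
    obtain ⟨rfl, rfl⟩ := Sequent.mk.inj hS
    exact .inr (.inl ⟨C, x, H, t, rfl, hgood, hp⟩)
  | candChoose | callChoose | replicate => simp at hS
  | wait X P hstable _ _ hcall _ hprov =>
    subst hS
    refine .inr (.inr ⟨stable_nil_iff.mp hstable, fun C x H hF => ?_⟩)
    obtain ⟨y, hy, hP⟩ := hcall C x H hF
    exact ⟨y, hy, hprov _ hP⟩

lemma Provable.valid_of_isElementary {F : Formula} (h : Provable ⟨[], F⟩)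
    (hF : F.IsElementary) : Valid F := by
  rcases h.nil_cases with ⟨C, _, _, _, rfl, _⟩ | ⟨C, _, _, _, rfl, _⟩ | ⟨hv, _⟩
  · exact (C.isElementary_of_fill hF).elim
  · exact (C.isElementary_of_fill hF).elim
  · rwa [Formula.elz_eq_self hF] at hv

lemma Provable.of_valid {F : Formula} (hF : F.IsElementary) (hv : Valid F) :
    Provable ⟨[], F⟩ := by
  refine .wait _ (fun _ => False) ?_ ?_ ?_ ?_ ?_ (fun _ h => h.elim)
  · rwa [stable_nil_iff, Formula.elz_eq_self hF]
  · rintro C _ _ rfl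
    exact (C.isElementary_of_fill hF).elim
  · intro _ _ _ _ _ h
    simp at h
  · rintro C _ _ rfl
    exact (C.isElementary_of_fill hF).elim
  · intro _ _ _ _ _ h
    simp at h

section UnaryPredicate

variable (p : ℕ)

lemma subst_impl_pos (x : ℕ) (a b s : Term) :
    ((Formula.pos p 1 ![a]).impl (.pos p 1 ![b])).subst x s =
      (Formula.pos p 1 ![Term.subst x s a]).impl (.pos p 1 ![Term.subst x s b]) := by
  simp only [Formula.impl, Formula.negation, Formula.subst]
  congr <;> funext i <;> fin_cases i <;> rfl

/-- In `Bool`, with every constant and function value `false`, a term free of `z` evaluates to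
`false` when only `z` is sent to `true`. -/
lemma not_valid_impl_pos (z : ℕ) (t : Term) (hz : z ∉ t.vars) :
    ¬ Valid ((Formula.pos p 1 ![.var z]).impl (.pos p 1 ![t])) := by
  let I : Interp := ⟨Bool, ⟨false⟩, fun _ => false, fun _ _ _ => false,
    fun _ _ args => ∀ i, args i = true⟩
  have eval_false : t.eval I (fun v => decide (v = z)) = false := by
    cases t <;> simp_all [Term.eval, Term.vars, I, eq_comm]
  intro hv
  have := hv I fun v => decide (v = z)
  simp [Formula.impl, Formula.negation, Formula.truth, Term.eval, I, eval_false] at this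

lemma not_provable_call_impl_pos (x : ℕ) (t : Term) (hx : x ∉ t.vars) :
    ¬ Provable ⟨[], .call x ((Formula.pos p 1 ![.var x]).impl (.pos p 1 ![t]))⟩ := by
  intro h
  rcases h.nil_cases with ⟨C, _, _, _, hF, _⟩ | ⟨C, _, _, _, hF, _⟩ | ⟨_, hcall⟩
  · cases Ctx.eq_hole_of_fill_eq_call hF.symm
    cases hF
  · cases Ctx.eq_hole_of_fill_eq_call hF.symm
    cases hF
  · obtain ⟨z, hz, hprov⟩ := hcall .hole x _ rfl
    rw [Ctx.fill, subst_impl_pos, Term.subst_eq_self t hx] at hprov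
    have hzt : z ∉ t.vars := fun hzt => hz (by simp [Formula.vars, Formula.impl,
      Formula.negation, Term.vars, hzt])
    simp only [Term.subst, ite_true] at hprov
    exact not_valid_impl_pos p z t hzt (hprov.valid_of_isElementary ⟨trivial, trivial⟩)

lemma not_provable_cex_call_impl_pos {x y : ℕ} (hxy : x ≠ y) :
    ¬ Provable ⟨[],
      .cex y (.call x ((Formula.pos p 1 ![.var x]).impl (.pos p 1 ![.var y])))⟩ := by
  intro h
  rcases h.nil_cases with ⟨C, _, _, _, hF, _⟩ | ⟨C, _, H, t, hF, hgood, hprov⟩ | ⟨hv, _⟩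
  · cases Ctx.eq_hole_of_fill_eq_cex hF.symm
    cases hF
  · cases Ctx.eq_hole_of_fill_eq_cex hF.symm
    cases hF
    simp only [Ctx.fill, Formula.subst, if_neg hxy, subst_impl_pos] at hprov hgood
    simp only [Term.subst, if_neg hxy, ite_true] at hprov hgood
    refine not_provable_call_impl_pos p x t ?_ hprov
    rcases hgood with ⟨c, rfl⟩ | ⟨z, rfl, hz⟩
    · simp [Term.vars]
    · rintro hxz
      cases Finset.mem_singleton.mp hxz
      exact hz (by simp [Sequent.boundVars, Formula.boundVars])
  · exact not_valid_bot hv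

lemma valid_ex_all_impl_pos {x y : ℕ} (hxy : x ≠ y) :
    Valid (.ex y (.all x ((Formula.pos p 1 ![.var x]).impl (.pos p 1 ![.var y])))) := by
  intro I e
  simp only [Formula.impl, Formula.negation, Formula.truth, Term.eval, Matrix.cons_val_fin_one,
    Function.update_self, Function.update_of_ne (Ne.symm hxy)]
  by_cases hex : ∃ u, I.predI p 1 fun _ => u
  · obtain ⟨u, hu⟩ := hex
    exact ⟨u, fun _ => .inr hu⟩
  · obtain ⟨u⟩ := I.hU
    exact ⟨u, fun v => .inl fun hv => hex ⟨v, hv⟩⟩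

end UnaryPredicate

/-- Example 8.4, unprovability part: ⊔y⊓x(p(x) → p(y)) is not provable in
CL12, even though its classical counterpart ∃y∀x(p(x) → p(y)) is a classically
valid elementary formula and hence is provable in CL12. -/
theorem example_8_4_unprovable :
    (¬ Provable ⟨[],
        .cex 1 (.call 0
          (Formula.impl (.pos 0 1 ![Term.var 0]) (.pos 0 1 ![Term.var 1])))⟩) ∧
    Valid (.ex 1 (.all 0
      (Formula.impl (.pos 0 1 ![Term.var 0]) (.pos 0 1 ![Term.var 1])))) ∧
    Provable ⟨[],
      .ex 1 (.all 0
        (Formula.impl (.pos 0 1 ![Term.var 0]) (.pos 0 1 ![Term.var 1])))⟩ :=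
  have hvalid := valid_ex_all_impl_pos 0 zero_ne_one
  ⟨not_provable_cex_call_impl_pos 0 zero_ne_one, hvalid,
    Provable.of_valid ⟨trivial, trivial⟩ hvalid⟩

end CL12
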